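/- Let α ∈ T_n be an idempotent and let ε be an idempotent of the variant (T_n, *_α) (i.e., εαε = ε). The maximal subgroup of (T_n, *_α) with identity ε consists exactly of those β ∈ T_n with the same kernel partition and the same image as ε, and this group is isomorphic to the symmetric group on im(ε). -/

import Mathlib

/-!
For `y ∈ im ε` the idempotency `εαε = ε` gives `ε (α y) = y`, so `β ↦ (y ↦ β (α y))` turns
every `β` with `εαβ = β` into a self-map of `im ε`, and `*_α`-multiplication into composition.
When `β` has the kernel and image of `ε` this self-map is a permutation of the finite set
`im ε`, so some power of it is the identity; that power, precomposed with `β`, is a `*_α`-power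
of `β` equal to `ε`. Conversely a `*_α`-power of `β` factors through `β` on both sides, which
together with `βαε = β = εαβ` forces `β` to share kernel and image with `ε`. A permutation
`π` of `im ε` is realised by `x ↦ π (ε x)`.
-/

open Set Function

/-- The sandwich multiplication `β *_α γ = βαγ` on `T_n` (left-to-right composition). -/
def vmul {n : ℕ} (α β γ : Fin n → Fin n) : Fin n → Fin n :=
  fun x => γ (α (β x))

/-- `vpow α β m = β^{*(m+1)}`, the positive `*_α`-powers of `β`. -/
def vpow {n : ℕ} (α β : Fin n → Fin n) : ℕ → (Fin n → Fin n)
  | 0 => β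
  | m + 1 => vmul α (vpow α β m) β

section Sandwich

variable {X : Type*} {α ε β γ : X → X}

theorem apply_apply_eq_self_of_mem_range (hε : ε ∘ α ∘ ε = ε) {y : X} (hy : y ∈ range ε) :
    ε (α y) = y := by
  obtain ⟨x, rfl⟩ := hy
  exact congrFun hε x

theorem comp_comp_eq_of_ker_le (hε : ε ∘ α ∘ ε = ε) (hker : ∀ x y, ε x = ε y → β x = β y) :
    β ∘ α ∘ ε = β :=
  funext fun x => hker _ _ (congrFun hε x)

theorem comp_comp_eq_of_range_subset (hε : ε ∘ α ∘ ε = ε) (hrange : range β ⊆ range ε) :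
    ε ∘ α ∘ β = β :=
  funext fun x => apply_apply_eq_self_of_mem_range hε (hrange (mem_range_self x))

/-- `β` acting on `im ε` through `y ↦ β (α y)`; the outer `ε ∘ α` only keeps the value in
`im ε` for arbitrary `β` and is invisible once `εαβ = β`. -/
def restrictToImage (α ε β : X → X) : range ε → range ε :=
  fun y => rangeFactorization ε (α (β (α y)))

theorem coe_restrictToImage (hβ : ε ∘ α ∘ β = β) (y : range ε) :
    (restrictToImage α ε β y : X) = β (α y) :=
  congrFun hβ _

theorem coe_iterate_restrictToImage (hβ : ε ∘ α ∘ β = β) (j : ℕ) (y : range ε) :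
    ((restrictToImage α ε β)^[j] y : X) = (β ∘ α)^[j] y :=
  (Semiconj.iterate_right (f := Subtype.val) (fun y => coe_restrictToImage hβ y) j) y

theorem restrictToImage_bijective (hε : ε ∘ α ∘ ε = ε) (hker : ∀ x y, β x = β y ↔ ε x = ε y)
    (hrange : range β = range ε) : Bijective (restrictToImage α ε β) := by
  have hβ := comp_comp_eq_of_range_subset hε hrange.subset
  constructor
  · intro y₁ y₂ h
    have hβα : β (α y₁) = β (α y₂) := by
      rw [← coe_restrictToImage hβ, ← coe_restrictToImage hβ, h]
    apply Subtype.ext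
    rw [← apply_apply_eq_self_of_mem_range hε y₁.2, ← apply_apply_eq_self_of_mem_range hε y₂.2]
    exact (hker _ _).mp hβα
  · rintro ⟨_, hy⟩
    obtain ⟨x, rfl⟩ := hrange ▸ hy
    refine ⟨rangeFactorization ε x, Subtype.ext ?_⟩
    rw [coe_restrictToImage hβ]
    exact congrFun (comp_comp_eq_of_ker_le hε fun x y => (hker x y).mpr) x

theorem exists_iterate_comp_eq [Finite X] (hε : ε ∘ α ∘ ε = ε)
    (hker : ∀ x y, β x = β y ↔ ε x = ε y) (hrange : range β = range ε) :
    ∃ m, (β ∘ α)^[m] ∘ β = ε := by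
  have hβ := comp_comp_eq_of_range_subset hε hrange.subset
  have hβε := comp_comp_eq_of_ker_le hε fun x y => (hker x y).mpr
  have := Fintype.ofFinite (range ε)
  set N := (Fintype.card (range ε)).factorial
  have hN : (restrictToImage α ε β)^[N] = id :=
    injective_iff_iterate_factorial_card_eq_id.mp (restrictToImage_bijective hε hker hrange).1
  refine ⟨N - 1, funext fun x => ?_⟩
  -- `β x = (β ∘ α) (ε x)`, so this is the `N`-th iterate of `β ∘ α` at `ε x ∈ im ε`
  calc ((β ∘ α)^[N - 1] ∘ β) x = (β ∘ α)^[N - 1 + 1] (ε x) := by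
        rw [iterate_succ_apply, comp_apply, ← congrFun hβε x]; rfl
    _ = ε x := by
        rw [Nat.sub_add_cancel (Nat.factorial_pos _)]
        exact (coe_iterate_restrictToImage hβ N (rangeFactorization ε x)).symm.trans
          (by rw [hN]; rfl)

theorem restrictToImage_injOn :
    InjOn (restrictToImage α ε) {β | β ∘ α ∘ ε = β ∧ ε ∘ α ∘ β = β} := by
  rintro β ⟨hβε, hβ⟩ γ ⟨hγε, hγ⟩ h
  rw [← hβε, ← hγε]
  funext x
  have := congrArg Subtype.val (congrFun h (rangeFactorization ε x))
  rwa [coe_restrictToImage hβ, coe_restrictToImage hγ] at this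

theorem restrictToImage_comp (hβ : ε ∘ α ∘ β = β) :
    restrictToImage α ε (γ ∘ α ∘ β) = restrictToImage α ε γ ∘ restrictToImage α ε β := by
  funext y
  exact Subtype.ext (congrArg (fun z => ε (α (γ (α z)))) (congrFun hβ (α y)).symm)

def extendPerm (ε : X → X) (π : Equiv.Perm (range ε)) : X → X :=
  Subtype.val ∘ π ∘ rangeFactorization ε

theorem extendPerm_eq_iff (π : Equiv.Perm (range ε)) (x y : X) :
    extendPerm ε π x = extendPerm ε π y ↔ ε x = ε y := by
  simp only [extendPerm, comp_apply, Subtype.val_inj, π.apply_eq_iff_eq,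
    rangeFactorization, Subtype.mk.injEq]

theorem range_extendPerm (π : Equiv.Perm (range ε)) : range (extendPerm ε π) = range ε := by
  rw [extendPerm, range_comp, range_comp, rangeFactorization_surjective.range_eq, image_univ,
    π.range_eq_univ, image_univ, Subtype.range_coe]

theorem restrictToImage_extendPerm (hε : ε ∘ α ∘ ε = ε) (π : Equiv.Perm (range ε)) :
    restrictToImage α ε (extendPerm ε π) = π := by
  funext y
  apply Subtype.ext
  rw [coe_restrictToImage (comp_comp_eq_of_range_subset hε (range_extendPerm π).subset)]
  simp only [extendPerm, comp_apply, rangeFactorization,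
    apply_apply_eq_self_of_mem_range hε y.2]

end Sandwich

section Variant

variable {n : ℕ} {α β ε : Fin n → Fin n}

theorem vpow_eq_iterate_comp (α β : Fin n → Fin n) (m : ℕ) :
    vpow α β m = (β ∘ α)^[m] ∘ β := by
  induction m with
  | zero => rfl
  | succ m ih => rw [vpow, ih, iterate_succ']; rfl

theorem vpow_eq_comp_iterate (α β : Fin n → Fin n) (m : ℕ) :
    vpow α β m = β ∘ (α ∘ β)^[m] := by
  rw [vpow_eq_iterate_comp]
  exact ((Semiconj.iterate_right (f := β) (ga := α ∘ β) (fun _ => rfl) m).comp_eq).symm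

/-- The maximal subgroup `G(ε)` of the variant `(T_n, *_α)`. -/
def variantMaximalSubgroup (α ε : Fin n → Fin n) : Set (Fin n → Fin n) :=
  {β | (∃ m : ℕ, vpow α β m = ε) ∧ vmul α ε β = β ∧ vmul α β ε = β}

theorem mem_variantMaximalSubgroup_iff (hε : vmul α ε ε = ε) :
    β ∈ variantMaximalSubgroup α ε ↔
      (∀ x y, β x = β y ↔ ε x = ε y) ∧ range β = range ε := by
  constructor
  · rintro ⟨⟨m, hm⟩, hβε, hεβ⟩
    refine ⟨fun x y => ⟨fun h => ?_, fun h => ?_⟩, Subset.antisymm ?_ ?_⟩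
    · rw [← hm, vpow_eq_iterate_comp, comp_apply, comp_apply, h]
    · rw [← congrFun hβε x, ← congrFun hβε y]
      exact congrArg (β ∘ α) h
    · rintro _ ⟨x, rfl⟩
      exact ⟨α (β x), congrFun hεβ x⟩
    · rw [← hm, vpow_eq_comp_iterate, range_comp]
      exact image_subset_range _ _
  · rintro ⟨hker, hrange⟩
    obtain ⟨m, hm⟩ := exists_iterate_comp_eq hε hker hrange
    exact ⟨⟨m, (vpow_eq_iterate_comp α β m).trans hm⟩,
      comp_comp_eq_of_ker_le hε fun x y => (hker x y).mpr,
      comp_comp_eq_of_range_subset hε hrange.subset⟩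

end Variant

theorem maximal_subgroup_description_general {n : ℕ} (α ε : Fin n → Fin n)
    (hε : vmul α ε ε = ε) :
    (∀ β : Fin n → Fin n,
      ((∃ m : ℕ, vpow α β m = ε) ∧ vmul α ε β = β ∧ vmul α β ε = β) ↔
        ((∀ x y, β x = β y ↔ ε x = ε y) ∧ Set.range β = Set.range ε)) ∧
    (∃ Φ : (Fin n → Fin n) → (Set.range ε → Set.range ε),
      (∀ β ∈ {β | (∃ m : ℕ, vpow α β m = ε) ∧ vmul α ε β = β ∧ vmul α β ε = β},
        Function.Bijective (Φ β)) ∧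
      (Set.InjOn Φ {β | (∃ m : ℕ, vpow α β m = ε) ∧ vmul α ε β = β ∧ vmul α β ε = β}) ∧
      (∀ π : Equiv.Perm (Set.range ε),
        ∃ β ∈ {β | (∃ m : ℕ, vpow α β m = ε) ∧ vmul α ε β = β ∧ vmul α β ε = β},
          Φ β = ⇑π) ∧
      (∀ β ∈ {β | (∃ m : ℕ, vpow α β m = ε) ∧ vmul α ε β = β ∧ vmul α β ε = β},
        ∀ γ ∈ {β | (∃ m : ℕ, vpow α β m = ε) ∧ vmul α ε β = β ∧ vmul α β ε = β},
          Φ (vmul α β γ) = Φ γ ∘ Φ β)) := by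
  have hmem (β : Fin n → Fin n) := mem_variantMaximalSubgroup_iff (β := β) hε
  refine ⟨hmem, restrictToImage α ε, fun β hβ => ?_, ?_, fun π => ?_, ?_⟩
  · obtain ⟨hker, hrange⟩ := (hmem β).mp hβ
    exact restrictToImage_bijective hε hker hrange
  · exact restrictToImage_injOn.mono fun β hβ => hβ.2
  · refine ⟨extendPerm ε π, (hmem _).mpr ⟨extendPerm_eq_iff π, range_extendPerm π⟩, ?_⟩
    exact restrictToImage_extendPerm hε π
  · exact fun β hβ γ _ => restrictToImage_comp hβ.2.2

/-- The maximal subgroup `G(ε) = {β ∈ √ε : ε*β = β*ε = β}` of `(T_n, *_α)` at an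
idempotent `ε` consists exactly of the `β` with the same kernel and image as `ε`,
and it is isomorphic to the symmetric group on `im(ε)`. -/
theorem maximal_subgroup_description {n : ℕ} (α ε : Fin n → Fin n)
    (hα : ∀ x, α (α x) = α x) (hε : vmul α ε ε = ε) :
    (∀ β : Fin n → Fin n,
      ((∃ m : ℕ, vpow α β m = ε) ∧ vmul α ε β = β ∧ vmul α β ε = β) ↔
        ((∀ x y, β x = β y ↔ ε x = ε y) ∧ Set.range β = Set.range ε)) ∧
    (∃ Φ : (Fin n → Fin n) → (Set.range ε → Set.range ε),
      (∀ β ∈ {β | (∃ m : ℕ, vpow α β m = ε) ∧ vmul α ε β = β ∧ vmul α β ε = β},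
        Function.Bijective (Φ β)) ∧
      (Set.InjOn Φ {β | (∃ m : ℕ, vpow α β m = ε) ∧ vmul α ε β = β ∧ vmul α β ε = β}) ∧
      (∀ π : Equiv.Perm (Set.range ε),
        ∃ β ∈ {β | (∃ m : ℕ, vpow α β m = ε) ∧ vmul α ε β = β ∧ vmul α β ε = β},
          Φ β = ⇑π) ∧
      (∀ β ∈ {β | (∃ m : ℕ, vpow α β m = ε) ∧ vmul α ε β = β ∧ vmul α β ε = β},
        ∀ γ ∈ {β | (∃ m : ℕ, vpow α β m = ε) ∧ vmul α ε β = β ∧ vmul α β ε = β},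
          Φ (vmul α β γ) = Φ γ ∘ Φ β)) :=
  maximal_subgroup_description_general α ε hε
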